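/- arXiv:2407.15585 — 2 statements merged into one kernel-verified Lean document; each statement's English description precedes it below -/
import Mathlib

section
/- Let F̄ ⊆ ℝ^m be finite and nonempty and let b ∉ vrs(F̄). Then there exists π ∈ ℝ^m with π ≥ 0, π ≠ 0, and β ∈ ℝ such that ⟨π, a⟩ ≤ β for all a ∈ F̄ and ⟨π, b⟩ > β. That is, b can be separated from vrs(F̄) by a hyperplane with a nonnegative normal vector. -/
/-!
`vrs F` is the convex hull of `F` plus the nonpositive orthant: a compact convex set plus a
closed convex cone, hence closed and convex, so Hahn–Banach separates `b` from it by a linear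
functional `f`. Since `vrs F` is a nonempty lower set on which `f` is bounded above, `f` cannot
decrease along a nonnegative direction, i.e. its coefficients `f (Pi.single i 1)` are nonnegative.
-/

open scoped Classical
open Finset

noncomputable section

/-- The VRS (free-disposal convex) hull of a finite set of points in ℝ^m. -/
def vrs {m : ℕ} (S : Finset (Fin m → ℝ)) : Set (Fin m → ℝ) :=
  {z | ∃ l : (Fin m → ℝ) → ℝ, (∀ a, 0 ≤ l a) ∧ (∑ a ∈ S, l a) = 1 ∧
    ∀ k, z k ≤ ∑ a ∈ S, l a * a k}

/-- The frame of `A`: the points of `A` that are extreme points of `vrs A`. -/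
def frame {m : ℕ} (A : Finset (Fin m → ℝ)) : Finset (Fin m → ℝ) :=
  A.filter fun a => a ∈ Set.extremePoints ℝ (vrs A)

open scoped Pointwise

lemma IsLowerSet.map_nonneg_of_forall_map_lt {E : Type*} [AddCommGroup E] [PartialOrder E]
    [IsOrderedAddMonoid E] [Module ℝ E] [PosSMulMono ℝ E] {s : Set E} (hs : IsLowerSet s)
    {a : E} (ha : a ∈ s) (f : E →ₗ[ℝ] ℝ) {u : ℝ} (hf : ∀ x ∈ s, f x < u) {v : E}
    (hv : 0 ≤ v) : 0 ≤ f v := by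
  by_contra! hfv
  -- moving down from `a` along `v` by this amount raises `f` exactly to `u`
  set t := (u - f a) / -f v
  have ht : 0 ≤ t := div_nonneg (sub_nonneg.2 (hf a ha).le) (neg_nonneg.2 hfv.le)
  have hmem : a - t • v ∈ s := hs (sub_le_self a (smul_nonneg ht hv)) ha
  have hval : f (a - t • v) = u := by
    rw [map_sub, map_smul, smul_eq_mul, div_mul_eq_mul_div, div_neg, mul_div_cancel_right₀ _ hfv.ne]
    ring
  exact (hf _ hmem).ne hval

lemma LinearMap.apply_eq_sum_map_single_mul {R ι : Type*} [CommSemiring R] [Fintype ι]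
    [DecidableEq ι] (f : (ι → R) →ₗ[R] R) (x : ι → R) :
    f x = ∑ i, f (Pi.single i 1) * x i := by
  rw [f.pi_apply_eq_sum_univ x]
  refine Finset.sum_congr rfl fun i _ => ?_
  rw [smul_eq_mul, mul_comm]
  congr 2
  ext j
  simp only [Pi.single_apply, eq_comm]

lemma Set.add_Iic_zero {E : Type*} [AddCommGroup E] [PartialOrder E] [IsOrderedAddMonoid E]
    (s : Set E) : s + Set.Iic 0 = {z | ∃ y ∈ s, z ≤ y} := by
  ext z
  constructor
  · rintro ⟨y, hy, v, hv, rfl⟩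
    exact ⟨y, hy, add_le_of_nonpos_right hv⟩
  · rintro ⟨y, hy, hzy⟩
    exact ⟨y, hy, z - y, sub_nonpos.2 hzy, add_sub_cancel y z⟩

section vrs

variable {m : ℕ} (F : Finset (Fin m → ℝ))

lemma mem_vrs_iff {z : Fin m → ℝ} :
    z ∈ vrs F ↔ ∃ l : (Fin m → ℝ) → ℝ, (∀ a, 0 ≤ l a) ∧ ∑ a ∈ F, l a = 1 ∧
      z ≤ ∑ a ∈ F, l a • a := by
  simp [vrs, Pi.le_def, Finset.sum_apply]

lemma vrs_eq_convexHull_add_Iic : vrs F = convexHull ℝ ↑F + Set.Iic 0 := by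
  ext z
  rw [Set.add_Iic_zero, Set.mem_ofPred_eq, mem_vrs_iff]
  constructor
  · rintro ⟨l, hl0, hl1, hz⟩
    exact ⟨_, Finset.mem_convexHull'.2 ⟨l, fun a _ => hl0 a, hl1, rfl⟩, hz⟩
  · rintro ⟨_, hy, hz⟩
    obtain ⟨w, hw0, hw1, rfl⟩ := Finset.mem_convexHull'.1 hy
    refine ⟨fun a => if a ∈ F then w a else 0, fun a => ?_, ?_, ?_⟩
    · dsimp only
      split_ifs with ha
      exacts [hw0 a ha, le_rfl]
    · rwa [Finset.sum_congr rfl fun a ha => if_pos ha]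
    · exact hz.trans_eq (Finset.sum_congr rfl fun a ha => by simp only [if_pos ha])

lemma convex_vrs : Convex ℝ (vrs F) := by
  rw [vrs_eq_convexHull_add_Iic]
  exact (convex_convexHull ℝ _).add (convex_Iic 0)

lemma isClosed_vrs : IsClosed (vrs F) := by
  rw [vrs_eq_convexHull_add_Iic]
  exact isClosed_Iic.add_left_of_isCompact (F.finite_toSet.isCompact_convexHull ℝ)

lemma isLowerSet_vrs : IsLowerSet (vrs F) :=
  fun _ _ hle ⟨l, hl0, hl1, hz⟩ => ⟨l, hl0, hl1, fun k => (hle k).trans (hz k)⟩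

variable {F} in
lemma mem_vrs_of_mem {a : Fin m → ℝ} (ha : a ∈ F) : a ∈ vrs F := by
  rw [vrs_eq_convexHull_add_Iic, Set.add_Iic_zero]
  exact ⟨a, subset_convexHull ℝ _ ha, le_rfl⟩

end vrs

theorem stmt6 {m : ℕ} (F : Finset (Fin m → ℝ)) (hF : F.Nonempty)
    (b : Fin m → ℝ) (hb : b ∉ vrs F) :
    ∃ (π : Fin m → ℝ) (β : ℝ), (∀ i, 0 ≤ π i) ∧ π ≠ 0 ∧
      (∀ a ∈ F, ∑ i, π i * a i ≤ β) ∧ β < ∑ i, π i * b i := by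
  obtain ⟨f, u, hfF, hfb⟩ := geometric_hahn_banach_closed_point (convex_vrs F) (isClosed_vrs F) hb
  obtain ⟨a₀, ha₀⟩ := hF
  set π : Fin m → ℝ := fun i => f (Pi.single i 1)
  have hf (x : Fin m → ℝ) : f x = ∑ i, π i * x i :=
    (f : (Fin m → ℝ) →ₗ[ℝ] ℝ).apply_eq_sum_map_single_mul x
  refine ⟨π, u, fun i => ?_, fun hπ => ?_, fun a ha => ?_, ?_⟩
  · exact (isLowerSet_vrs F).map_nonneg_of_forall_map_lt (mem_vrs_of_mem ha₀) f hfF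
      (Pi.single_nonneg.2 zero_le_one)
  · have hf0 (x : Fin m → ℝ) : f x = 0 := by simp [hf, hπ]
    linarith [hfF a₀ (mem_vrs_of_mem ha₀), hf0 a₀, hf0 b]
  · exact hf a ▸ (hfF a (mem_vrs_of_mem ha)).le
  · exact hf b ▸ hfb
end
end

section
/- BuildHull is correct: upon termination (when Ā = ∅), the set F̄ equals the frame F of A, i.e., F̄ is exactly the set of extreme points of vrs(A) contained in A. Moreover, throughout the procedure the sets F̄ form a nested increasing chain of subsets of F. -/
/-!
An extreme point `z` of `vrs A` lying in `vrs S` for some `S ⊆ A` is dominated by a point `w` of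
the convex hull of `S`. Since `vrs A` is a lower set, it also contains the reflection `2z - w` of `w`
through `z`; extremality forces `z = w`, so `z` is an extreme point of `conv S` and hence
a point of `S`. Therefore a point that BuildHull discards because it lies in `vrs F̄` is not in the
frame, and every step preserves the invariant `F̄ ⊆ frame A ⊆ F̄ ∪ Ā`, which for `Ā = ∅` reads
`F̄ = frame A`.
-/

open scoped Classical
open Finset

noncomputable section

lemma eq_of_mem_extremePoints_of_le {E : Type*} [AddCommGroup E] [PartialOrder E]
    [IsOrderedAddMonoid E] [Module ℝ E] {s : Set E} (hs : IsLowerSet s) {z w : E}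
    (hz : z ∈ Set.extremePoints ℝ s) (hw : w ∈ s) (hzw : z ≤ w) : z = w := by
  have hreflect : (2 : ℝ) • z - w ∈ s :=
    hs (by rw [two_smul, sub_le_iff_le_add]; exact add_le_add hzw hzw) hw
  have hmid : z ∈ openSegment ℝ w ((2 : ℝ) • z - w) :=
    ⟨1 / 2, 1 / 2, by norm_num, by norm_num, by norm_num, by module⟩
  exact (hz.2 hw hreflect hmid).symm

section Vrs

variable {m : ℕ}

lemma convex_vrs_s10 (S : Finset (Fin m → ℝ)) : Convex ℝ (vrs S) := by
  rintro x ⟨lx, hlx0, hlx1, hlx⟩ y ⟨ly, hly0, hly1, hly⟩ s t hs ht hst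
  refine ⟨s • lx + t • ly, fun a => add_nonneg (mul_nonneg hs (hlx0 a)) (mul_nonneg ht (hly0 a)),
    ?_, fun k => ?_⟩
  · simp [Finset.sum_add_distrib, ← Finset.mul_sum, hlx1, hly1, hst]
  · calc (s • x + t • y) k = s * x k + t * y k := rfl
      _ ≤ s * ∑ a ∈ S, lx a * a k + t * ∑ a ∈ S, ly a * a k := by
        gcongr
        exacts [hlx k, hly k]
      _ = ∑ a ∈ S, (s • lx + t • ly) a * a k := by
        simp [Finset.sum_add_distrib, Finset.mul_sum, add_mul, mul_assoc]

lemma subset_vrs (S : Finset (Fin m → ℝ)) : (S : Set (Fin m → ℝ)) ⊆ vrs S := by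
  intro a ha
  refine ⟨fun b => if b = a then 1 else 0, fun b => by positivity, ?_, fun k => ?_⟩
  · simpa using ha
  · simp [ite_mul, Finset.mem_coe.1 ha]

lemma convexHull_subset_vrs {S A : Finset (Fin m → ℝ)} (hSA : S ⊆ A) :
    convexHull ℝ (S : Set (Fin m → ℝ)) ⊆ vrs A :=
  convexHull_min ((Finset.coe_subset.2 hSA).trans (subset_vrs A)) (convex_vrs_s10 A)

lemma isLowerSet_vrs_s10 (S : Finset (Fin m → ℝ)) : IsLowerSet (vrs S) := by
  rintro w z hzw ⟨l, hl0, hl1, hle⟩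
  exact ⟨l, hl0, hl1, fun k => (hzw k).trans (hle k)⟩

lemma exists_mem_convexHull_le_of_mem_vrs {S : Finset (Fin m → ℝ)} {z : Fin m → ℝ}
    (hz : z ∈ vrs S) : ∃ w ∈ convexHull ℝ (S : Set (Fin m → ℝ)), z ≤ w := by
  obtain ⟨l, hl0, hl1, hle⟩ := hz
  refine ⟨∑ a ∈ S, l a • a, ?_, fun k => by simpa [Finset.sum_apply] using hle k⟩
  rw [← Finset.centerMass_eq_of_sum_1 _ _ hl1]
  exact Finset.centerMass_mem_convexHull S (fun a _ => hl0 a) (by simp [hl1])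
    (fun a ha => Finset.mem_coe.2 ha)

lemma mem_of_mem_extremePoints_vrs {S A : Finset (Fin m → ℝ)} (hSA : S ⊆ A)
    {z : Fin m → ℝ} (hz : z ∈ Set.extremePoints ℝ (vrs A)) (hzS : z ∈ vrs S) : z ∈ S := by
  obtain ⟨w, hw, hzw⟩ := exists_mem_convexHull_le_of_mem_vrs hzS
  obtain rfl := eq_of_mem_extremePoints_of_le (isLowerSet_vrs_s10 A) hz
    (convexHull_subset_vrs hSA hw) hzw
  have hext : z ∈ Set.extremePoints ℝ (convexHull ℝ (S : Set (Fin m → ℝ))) :=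
    inter_extremePoints_subset_extremePoints_of_subset (convexHull_subset_vrs hSA) ⟨hw, hz⟩
  exact Finset.mem_coe.1 (extremePoints_convexHull_subset hext)

end Vrs

structure HullInvariant {m : ℕ} (A F Abar : Finset (Fin m → ℝ)) : Prop where
  subset_frame : F ⊆ frame A
  subset : Abar ⊆ A
  frame_subset : frame A ⊆ F ∪ Abar

namespace HullInvariant

variable {m : ℕ} {A F Abar : Finset (Fin m → ℝ)}

lemma sdiff (hF : F ⊆ frame A) : HullInvariant A F (A \ F) where
  subset_frame := hF
  subset := sdiff_subset
  frame_subset := by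
    rw [union_sdiff_self_eq_union]
    exact (filter_subset _ A).trans subset_union_right

lemma erase_of_mem_vrs (h : HullInvariant A F Abar) {b : Fin m → ℝ} (hb : b ∈ vrs F) :
    HullInvariant A F (Abar.erase b) where
  subset_frame := h.subset_frame
  subset := (erase_subset b Abar).trans h.subset
  frame_subset x hx := by
    have hFA : F ⊆ A := h.subset_frame.trans (filter_subset _ A)
    rcases mem_union.1 (h.frame_subset hx) with hxF | hxAbar
    · exact mem_union_left _ hxF
    · by_cases hxb : x = b
      · subst hxb
        exact mem_union_left _ (mem_of_mem_extremePoints_vrs hFA (mem_filter.1 hx).2 hb)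
      · exact mem_union_right _ (mem_erase.2 ⟨hxb, hxAbar⟩)

lemma insert_erase (h : HullInvariant A F Abar) {a : Fin m → ℝ} (ha : a ∈ Abar)
    (hext : a ∈ Set.extremePoints ℝ (vrs A)) :
    HullInvariant A (insert a F) (Abar.erase a) where
  subset_frame := insert_subset (mem_filter.2 ⟨h.subset ha, hext⟩) h.subset_frame
  subset := (erase_subset a Abar).trans h.subset
  frame_subset := by
    rw [union_erase_of_mem (mem_insert_self a F)]
    exact h.frame_subset.trans (union_subset_union (subset_insert a F) Subset.rfl)

lemma eq_frame_of_empty (h : HullInvariant A F ∅) : F = frame A :=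
  h.subset_frame.antisymm (by simpa using h.frame_subset)

end HullInvariant

theorem stmt10 {m : ℕ} (A : Finset (Fin m → ℝ))
    (Fbar Abar : ℕ → Finset (Fin m → ℝ))
    (h0F : Fbar 0 ⊆ frame A) (h0A : Abar 0 = A \ Fbar 0)
    (hstep : ∀ t, (Abar t).Nonempty →
      (∃ b ∈ Abar t, b ∈ vrs (Fbar t) ∧ Fbar (t+1) = Fbar t ∧
        Abar (t+1) = (Abar t).erase b) ∨
      (∃ a ∈ Abar t, a ∈ Set.extremePoints ℝ (vrs A) ∧
        Fbar (t+1) = insert a (Fbar t) ∧ Abar (t+1) = (Abar t).erase a))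
    (hstop : ∀ t, Abar t = ∅ → Fbar (t+1) = Fbar t ∧ Abar (t+1) = Abar t) :
    (∀ t, Fbar t ⊆ Fbar (t+1) ∧ Fbar t ⊆ frame A) ∧
    (∀ T, Abar T = ∅ → Fbar T = frame A) := by
  have hmono : ∀ t, Fbar t ⊆ Fbar (t + 1) := by
    intro t
    rcases (Abar t).eq_empty_or_nonempty with hempty | hne
    · rw [(hstop t hempty).1]
    · rcases hstep t hne with ⟨b, -, -, hF, -⟩ | ⟨a, -, -, hF, -⟩
      · rw [hF]
      · rw [hF]; exact subset_insert a _
  have hinv : ∀ t, HullInvariant A (Fbar t) (Abar t) := by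
    intro t
    induction t with
    | zero => exact h0A ▸ HullInvariant.sdiff h0F
    | succ t ih =>
      rcases (Abar t).eq_empty_or_nonempty with hempty | hne
      · rwa [(hstop t hempty).1, (hstop t hempty).2]
      · rcases hstep t hne with ⟨b, -, hb, hF, hA⟩ | ⟨a, ha, hext, hF, hA⟩
        · rw [hF, hA]; exact ih.erase_of_mem_vrs hb
        · rw [hF, hA]; exact ih.insert_erase ha hext
  exact ⟨fun t => ⟨hmono t, (hinv t).subset_frame⟩,
    fun T hT => (hT ▸ hinv T).eq_frame_of_empty⟩
end
end
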